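/- arXiv:2506.02513 — 4 statements merged into one kernel-verified Lean document; each statement's English description precedes it below -/
import Mathlib

section
/- Let L = ∑_{j+|α|≤m} c_{jα} ∂_t^j ∂^α be a linear partial differential operator of order m on space-time ℝ×ℝⁿ with constant complex coefficients c_{jα}, not all top-order coefficients zero. If L is Lorentz invariant, i.e. Λ*Lu = LΛ*u for every Λ ∈ O(1,n) and every u ∈ C^∞(ℝ×ℝⁿ; ℂ), then there exist complex numbers b_0, …, b_{⌊m/2⌋} with b_{⌊m/2⌋} ≠ 0 such that L = ∑_{j=0}^{⌊m/2⌋} b_j □^j. -/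
/-!
Write `L = P(∂)` with its symbol `P`. Testing `L` on the exponentials `x ↦ exp (ξ ⬝ x)`, `ξ` real,
shows `P(Λξ) = P(ξ)` for all `Λ ∈ O(1,n)`. Let `q(ξ) = ξ₀² - |ξ'|²`. Two vectors with the
same value `q > 0` are exchanged by a Minkowski reflection, possibly composed with `ζ ↦ -ζ`, so on
the open timelike cone `P(ξ) = g(√q(ξ))`, where `g` is the restriction of `P` to the time axis.
Since `e₀` and `-e₀` lie in one orbit, `g` is even, `g(t) = h(t²)`; hence `P = h(q)` on an open set
and therefore everywhere, i.e. `L = h(□)`. As `q` is homogeneous of degree two, a nonzero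
coefficient of order `m` of `P` can only come from the coefficient of `h` of degree `m / 2`.
-/

open scoped BigOperators

noncomputable section

/-- Partial derivative in the `i`-th coordinate direction. -/
def pd {d : ℕ} (i : Fin d) (u : (Fin d → ℝ) → ℂ) : (Fin d → ℝ) → ℂ :=
  fun x => fderiv ℝ u x (Pi.single i 1)

/-- Iterated mixed partial derivative `∂^β` for a multi-index `β`. -/
def pdMulti {d : ℕ} (β : Fin d → ℕ) (u : (Fin d → ℝ) → ℂ) : (Fin d → ℝ) → ℂ :=
  (List.finRange d).foldr (fun i v => (pd i)^[β i] v) u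

/-- The finite set of multi-indices (on `d` variables) of total degree at most `m`. -/
def mIdx (d m : ℕ) : Finset (Fin d → ℕ) :=
  (Fintype.piFinset fun _ : Fin d => Finset.range (m + 1)).filter fun β => (∑ i, β i) ≤ m

/-- The linear partial differential operator `L = ∑_{|β| ≤ m} a_β ∂^β`. -/
def opApply {d : ℕ} (m : ℕ) (a : (Fin d → ℕ) → (Fin d → ℝ) → ℂ)
    (u : (Fin d → ℝ) → ℂ) : (Fin d → ℝ) → ℂ :=
  fun x => ∑ β ∈ mIdx d m, a β x * pdMulti β u x

/-- Smooth (`C^∞`) functions. -/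
def SmoothFn {d : ℕ} (u : (Fin d → ℝ) → ℂ) : Prop := ContDiff ℝ (⊤ : ℕ∞) u

/-- The Minkowski metric matrix `g = diag(1, -1, …, -1)` on `ℝ × ℝⁿ`. -/
def minkMatrix (n : ℕ) : Matrix (Fin (n + 1)) (Fin (n + 1)) ℝ :=
  Matrix.diagonal fun i => if i = 0 then 1 else -1

/-- Membership in the Lorentz group `O(1,n)`:  `ᵗΛ g Λ = g`. -/
def IsLorentz {n : ℕ} (Λ : Matrix (Fin (n + 1)) (Fin (n + 1)) ℝ) : Prop :=
  Λ.transpose * minkMatrix n * Λ = minkMatrix n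

/-- The d'Alembertian `□ = ∂_t² - ∂₁² - ⋯ - ∂ₙ²` on space-time `ℝ × ℝⁿ`
(coordinate `0` is time). -/
def dAlem {n : ℕ} (u : (Fin (n + 1) → ℝ) → ℂ) : (Fin (n + 1) → ℝ) → ℂ :=
  fun x => pd 0 (pd 0 u) x - ∑ j : Fin n, pd j.succ (pd j.succ u) x

/-- `L` is translation invariant: `T_y^* L u = L T_y^* u`. -/
def TransInv {n : ℕ} (m : ℕ) (a : (Fin (n + 1) → ℕ) → (Fin (n + 1) → ℝ) → ℂ) : Prop :=
  ∀ y : Fin (n + 1) → ℝ, ∀ u : (Fin (n + 1) → ℝ) → ℂ, SmoothFn u →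
    ∀ x, opApply m a u (x - y) = opApply m a (fun z => u (z - y)) x

/-- `L` is Lorentz invariant: `Λ^* L u = L Λ^* u` for all `Λ ∈ O(1,n)`. -/
def LorentzInv {n : ℕ} (m : ℕ) (a : (Fin (n + 1) → ℕ) → (Fin (n + 1) → ℝ) → ℂ) : Prop :=
  ∀ Λ : Matrix (Fin (n + 1)) (Fin (n + 1)) ℝ, IsLorentz Λ →
    ∀ u : (Fin (n + 1) → ℝ) → ℂ, SmoothFn u →
      ∀ x, opApply m a u (Λ.mulVec x) = opApply m a (fun z => u (Λ.mulVec z)) x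

open MvPolynomial
open scoped Matrix

section PartialDerivatives

variable {d : ℕ} {u v : (Fin d → ℝ) → ℂ}

theorem SmoothFn.differentiable (hu : SmoothFn u) : Differentiable ℝ u :=
  ContDiff.differentiable hu (by simp)

theorem smoothFn_pd (hu : SmoothFn u) (i : Fin d) : SmoothFn (pd i u) :=
  (contDiff_infty_iff_fderiv.mp hu).2.clm_apply contDiff_const

theorem smoothFn_iterate_pd (hu : SmoothFn u) (i : Fin d) (k : ℕ) :
    SmoothFn ((pd i)^[k] u) := by
  induction k generalizing u with
  | zero => exact hu
  | succ k ih => exact ih (smoothFn_pd hu i)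

theorem smoothFn_foldr_iterate_pd (hu : SmoothFn u) (β : Fin d → ℕ) (l : List (Fin d)) :
    SmoothFn (l.foldr (fun i v => (pd i)^[β i] v) u) := by
  induction l with
  | nil => exact hu
  | cons a t ih => exact smoothFn_iterate_pd ih a (β a)

theorem smoothFn_pdMulti (hu : SmoothFn u) (β : Fin d → ℕ) : SmoothFn (pdMulti β u) :=
  smoothFn_foldr_iterate_pd hu β _

theorem pd_add (hu : Differentiable ℝ u) (hv : Differentiable ℝ v) (i : Fin d) :
    pd i (u + v) = pd i u + pd i v := by
  ext x
  simp [pd, fderiv_add (hu x) (hv x)]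

theorem pd_const_smul (hu : Differentiable ℝ u) (a : ℂ) (i : Fin d) :
    pd i (a • u) = a • pd i u := by
  ext x
  simp [pd, fderiv_const_smul (hu x) a]

theorem pd_comm (hu : SmoothFn u) (i j : Fin d) : pd i (pd j u) = pd j (pd i u) := by
  ext x
  have hD : DifferentiableAt ℝ (fderiv ℝ u) x :=
    ((contDiff_infty_iff_fderiv.mp hu).2.differentiable (by simp)).differentiableAt
  have hsymm : IsSymmSndFDerivAt ℝ u x :=
    hu.contDiffAt.isSymmSndFDerivAt
      (by rw [minSmoothness_of_isRCLikeNormedField]; exact WithTop.coe_le_coe.mpr le_top)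
  unfold pd
  rw [fderiv_clm_apply hD (differentiableAt_const _),
    fderiv_clm_apply hD (differentiableAt_const _)]
  simpa using hsymm.eq (Pi.single i 1) (Pi.single j 1)

end PartialDerivatives

section MultiIndex

variable {d : ℕ} {u : (Fin d → ℝ) → ℂ}

theorem pd_iterate_comm (hu : SmoothFn u) (i j : Fin d) (k : ℕ) :
    pd i ((pd j)^[k] u) = (pd j)^[k] (pd i u) := by
  induction k generalizing u with
  | zero => rfl
  | succ k ih => simp only [Function.iterate_succ_apply, ih (smoothFn_pd hu j), pd_comm hu]

theorem pd_foldr_iterate_pd_comm (hu : SmoothFn u) (β : Fin d → ℕ) (i : Fin d)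
    (l : List (Fin d)) :
    pd i (l.foldr (fun j v => (pd j)^[β j] v) u)
      = l.foldr (fun j v => (pd j)^[β j] v) (pd i u) := by
  induction l with
  | nil => rfl
  | cons a t ih =>
    simp only [List.foldr_cons]
    rw [pd_iterate_comm (smoothFn_foldr_iterate_pd hu β t), ih]

theorem foldr_iterate_pd_add_single (hu : SmoothFn u) (β : Fin d → ℕ) {i : Fin d}
    {l : List (Fin d)} (hl : l.Nodup) (hi : i ∈ l) :
    l.foldr (fun j v => (pd j)^[(β + Pi.single i 1 : Fin d → ℕ) j] v) u
      = l.foldr (fun j v => (pd j)^[β j] v) (pd i u) := by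
  induction l with
  | nil => simp at hi
  | cons a t ih =>
    obtain ⟨hat, ht⟩ := List.nodup_cons.mp hl
    simp only [List.foldr_cons]
    rcases eq_or_ne a i with rfl | hne
    · have hrest : t.foldr (fun j v => (pd j)^[(β + Pi.single a 1 : Fin d → ℕ) j] v) u
          = t.foldr (fun j v => (pd j)^[β j] v) u :=
        List.foldr_ext _ _ _ fun j hj _ => by
          rw [Pi.add_apply, Pi.single_eq_of_ne (ne_of_mem_of_not_mem hj hat), add_zero]
      rw [hrest, Pi.add_apply, Pi.single_eq_same, Function.iterate_succ_apply,
        pd_foldr_iterate_pd_comm hu]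
    · rw [ih ht (List.mem_of_ne_of_mem hne.symm hi), Pi.add_apply, Pi.single_eq_of_ne hne,
        add_zero]

theorem pdMulti_add_single (hu : SmoothFn u) (β : Fin d → ℕ) (i : Fin d) :
    pdMulti (β + Pi.single i 1) u = pd i (pdMulti β u) := by
  rw [pdMulti, pdMulti, pd_foldr_iterate_pd_comm hu,
    foldr_iterate_pd_add_single hu β (List.nodup_finRange d) (List.mem_finRange i)]

theorem pdMulti_zero (u : (Fin d → ℝ) → ℂ) : pdMulti 0 u = u := by
  rw [pdMulti]
  induction List.finRange d with
  | nil => rfl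
  | cons a t ih => exact ih

end MultiIndex

section DiffOp

variable {d : ℕ} {u : (Fin d → ℝ) → ℂ}

def diffOp (u : (Fin d → ℝ) → ℂ) : MvPolynomial (Fin d) ℂ →ₗ[ℂ] (Fin d → ℝ) → ℂ :=
  (basisMonomials (Fin d) ℂ).constr ℂ fun β => pdMulti β u

theorem diffOp_monomial (β : Fin d →₀ ℕ) (a : ℂ) :
    diffOp u (monomial β a) = a • pdMulti β u := by
  have : monomial β a = a • basisMonomials (Fin d) ℂ β := by
    rw [coe_basisMonomials, smul_monomial, smul_eq_mul, mul_one]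
  rw [this, map_smul, diffOp, Module.Basis.constr_basis]

theorem diffOp_C (a : ℂ) : diffOp u (C a) = a • u := by
  rw [C_apply, diffOp_monomial, Finsupp.coe_zero, pdMulti_zero]

theorem smoothFn_diffOp (hu : SmoothFn u) (P : MvPolynomial (Fin d) ℂ) :
    SmoothFn (diffOp u P) := by
  induction P using MvPolynomial.induction_on' with
  | monomial β a => rw [diffOp_monomial]; exact (smoothFn_pdMulti hu β).const_smul a
  | add P Q hP hQ => rw [map_add]; exact hP.add hQ

theorem pd_diffOp (hu : SmoothFn u) (i : Fin d) (P : MvPolynomial (Fin d) ℂ) :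
    pd i (diffOp u P) = diffOp u (X i * P) := by
  induction P using MvPolynomial.induction_on' with
  | monomial β a =>
    rw [X, monomial_mul, one_mul, diffOp_monomial, diffOp_monomial, Finsupp.coe_add,
      Finsupp.single_eq_pi_single, add_comm, pdMulti_add_single hu,
      pd_const_smul (smoothFn_pdMulti hu β).differentiable]
  | add P Q hP hQ =>
    rw [map_add, pd_add (smoothFn_diffOp hu P).differentiable
      (smoothFn_diffOp hu Q).differentiable, hP, hQ, mul_add, map_add]

end DiffOp

section DAlembertian

variable {n : ℕ} {u : (Fin (n + 1) → ℝ) → ℂ}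

def dAlemPoly (n : ℕ) : MvPolynomial (Fin (n + 1)) ℂ :=
  X 0 ^ 2 - ∑ j : Fin n, X j.succ ^ 2

theorem dAlem_diffOp (hu : SmoothFn u) (P : MvPolynomial (Fin (n + 1)) ℂ) :
    dAlem (diffOp u P) = diffOp u (dAlemPoly n * P) := by
  have hsq : ∀ i, pd i (pd i (diffOp u P)) = diffOp u (X i ^ 2 * P) := fun i => by
    rw [pd_diffOp hu, pd_diffOp hu, ← mul_assoc, ← pow_two]
  ext x
  simp [dAlem, dAlemPoly, sub_mul, Finset.sum_mul, map_sub, map_sum, hsq]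

theorem dAlem_iterate_eq_diffOp (hu : SmoothFn u) (j : ℕ) :
    dAlem^[j] u = diffOp u (dAlemPoly n ^ j) := by
  induction j with
  | zero => rw [Function.iterate_zero_apply, pow_zero, ← C_1, diffOp_C, one_smul]
  | succ j ih => rw [Function.iterate_succ_apply', ih, dAlem_diffOp hu, pow_succ']

end DAlembertian

section Exponentials

variable {d : ℕ}

def expDot (ξ : Fin d → ℝ) : (Fin d → ℝ) → ℂ := fun x => Complex.exp (ξ ⬝ᵥ x : ℝ)

theorem hasFDerivAt_expDot (ξ x : Fin d → ℝ) :
    HasFDerivAt (expDot ξ)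
      (expDot ξ x • Complex.ofRealCLM.comp (dotProductBilin ℝ ℝ ξ).toContinuousLinearMap) x :=
  (Complex.ofRealCLM.comp (dotProductBilin ℝ ℝ ξ).toContinuousLinearMap).hasFDerivAt.cexp

theorem smoothFn_expDot (ξ : Fin d → ℝ) : SmoothFn (expDot ξ) :=
  (Complex.ofRealCLM.comp (dotProductBilin ℝ ℝ ξ).toContinuousLinearMap).contDiff.cexp

theorem pd_expDot (ξ : Fin d → ℝ) (i : Fin d) : pd i (expDot ξ) = (ξ i : ℂ) • expDot ξ := by
  ext x
  simp [pd, (hasFDerivAt_expDot ξ x).fderiv, mul_comm]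

theorem diffOp_expDot (ξ : Fin d → ℝ) (P : MvPolynomial (Fin d) ℂ) :
    diffOp (expDot ξ) P = eval (Complex.ofReal ∘ ξ) P • expDot ξ := by
  induction P using MvPolynomial.induction_on with
  | C a => rw [diffOp_C, eval_C]
  | add P Q hP hQ => rw [map_add, map_add, hP, hQ, add_smul]
  | mul_X P i hP =>
    rw [mul_comm, ← pd_diffOp (smoothFn_expDot ξ), hP,
      pd_const_smul (smoothFn_expDot ξ).differentiable, pd_expDot, smul_smul, eval_mul, eval_X,
      Function.comp_apply, mul_comm (ξ i : ℂ)]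

theorem expDot_zero (ξ : Fin d → ℝ) : expDot ξ 0 = 1 := by
  simp [expDot]

theorem expDot_comp_mulVec (ξ : Fin d → ℝ) (Λ : Matrix (Fin d) (Fin d) ℝ) :
    (fun z => expDot ξ (Λ *ᵥ z)) = expDot (Λᵀ *ᵥ ξ) := by
  ext z
  rw [expDot, expDot, Matrix.dotProduct_mulVec, Matrix.mulVec_transpose]

end Exponentials

section Symbol

variable {d : ℕ}

def symbolPoly (d m : ℕ) (c : (Fin d → ℕ) → ℂ) : MvPolynomial (Fin d) ℂ :=
  ∑ β ∈ mIdx d m, monomial (Finsupp.equivFunOnFinite.symm β) (c β)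

theorem opApply_eq_diffOp (m : ℕ) (c : (Fin d → ℕ) → ℂ) (u : (Fin d → ℝ) → ℂ) :
    opApply m (fun β _ => c β) u = diffOp u (symbolPoly d m c) := by
  ext x
  simp [opApply, symbolPoly, diffOp_monomial]

theorem totalDegree_symbolPoly_le (m : ℕ) (c : (Fin d → ℕ) → ℂ) :
    (symbolPoly d m c).totalDegree ≤ m := by
  refine (totalDegree_finsetSum _ _).trans (Finset.sup_le fun β hβ => ?_)
  refine (totalDegree_monomial_le _ _).trans ?_
  rw [Finsupp.sum_fintype _ _ fun _ => rfl]
  simpa [mIdx] using (Finset.mem_filter.mp hβ).2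

theorem coeff_symbolPoly {m : ℕ} (c : (Fin d → ℕ) → ℂ) {β : Fin d → ℕ} (hβ : β ∈ mIdx d m) :
    coeff (Finsupp.equivFunOnFinite.symm β) (symbolPoly d m c) = c β := by
  rw [symbolPoly, coeff_sum, Finset.sum_eq_single_of_mem β hβ fun γ _ hγ => by
    rw [coeff_monomial, if_neg (Finsupp.equivFunOnFinite.symm.injective.ne hγ)],
    coeff_monomial, if_pos rfl]

end Symbol

namespace LinearMap.BilinForm

variable {K V : Type*} [Field K] [AddCommGroup V] [Module K V] {B : LinearMap.BilinForm K V}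

theorem IsSymm.apply_preReflection_preReflection (hB : B.IsSymm) {w : V} (hw : B w w ≠ 0)
    (x y : V) :
    B (Module.preReflection w ((2 / B w w) • B w) x)
      (Module.preReflection w ((2 / B w w) • B w) y) = B x y := by
  simp only [Module.preReflection_apply, map_sub, map_smul, LinearMap.sub_apply,
    LinearMap.smul_apply, smul_eq_mul, hB.eq x w]
  field_simp
  ring

theorem IsSymm.preReflection_sub_apply (hB : B.IsSymm) {a b : V} (hab : B a a = B b b)
    (hw : B (a - b) (a - b) ≠ 0) :
    Module.preReflection (a - b) ((2 / B (a - b) (a - b)) • B (a - b)) a = b := by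
  have hwa : B (a - b) (a - b) = 2 * B (a - b) a := by
    simp only [map_sub, LinearMap.sub_apply, hB.eq b a, hab]
    ring
  rw [Module.preReflection_apply, LinearMap.smul_apply, smul_eq_mul, div_mul_eq_mul_div, ← hwa,
    div_self hw, one_smul, sub_sub_cancel]

end LinearMap.BilinForm

section Lorentz

variable {n : ℕ}

def minkowskiForm (n : ℕ) : LinearMap.BilinForm ℝ (Fin (n + 1) → ℝ) :=
  Matrix.toLinearMap₂' ℝ (minkMatrix n)

theorem minkowskiForm_apply (x y : Fin (n + 1) → ℝ) :
    minkowskiForm n x y = x 0 * y 0 - ∑ j : Fin n, x j.succ * y j.succ := by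
  simp [minkowskiForm, Matrix.toLinearMap₂'_apply', minkMatrix, dotProduct, Fin.sum_univ_succ,
    Matrix.mulVec_diagonal, sub_eq_add_neg]

theorem minkowskiForm_mulVec (Λ : Matrix (Fin (n + 1)) (Fin (n + 1)) ℝ) (x y : Fin (n + 1) → ℝ) :
    minkowskiForm n (Λ *ᵥ x) (Λ *ᵥ y) = Matrix.toLinearMap₂' ℝ (Λᵀ * minkMatrix n * Λ) x y := by
  simp only [minkowskiForm, Matrix.toLinearMap₂'_apply', Matrix.dotProduct_mulVec,
    ← Matrix.vecMul_vecMul, Matrix.vecMul_transpose]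

theorem isLorentz_of_minkowskiForm_mulVec {Λ : Matrix (Fin (n + 1)) (Fin (n + 1)) ℝ}
    (h : ∀ x y, minkowskiForm n (Λ *ᵥ x) (Λ *ᵥ y) = minkowskiForm n x y) : IsLorentz Λ := by
  refine (Matrix.toLinearMap₂' ℝ (S₁ := ℝ) (S₂ := ℝ)).injective (LinearMap.ext₂ fun x y => ?_)
  rw [← minkowskiForm_mulVec, h, minkowskiForm]

theorem minkMatrix_mul_self (n : ℕ) : minkMatrix n * minkMatrix n = 1 := by
  rw [minkMatrix, Matrix.diagonal_mul_diagonal, ← Matrix.diagonal_one]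
  congr 1
  ext i
  split_ifs <;> norm_num

theorem IsLorentz.transpose {Λ : Matrix (Fin (n + 1)) (Fin (n + 1)) ℝ} (h : IsLorentz Λ) :
    IsLorentz Λᵀ := by
  -- `g Λᵀ g` is a left, hence also a right, inverse of `Λ`.
  have hinv : (minkMatrix n * Λᵀ * minkMatrix n) * Λ = 1 := by
    rw [Matrix.mul_assoc, Matrix.mul_assoc, ← Matrix.mul_assoc Λᵀ, h, minkMatrix_mul_self]
  have := congrArg (· * minkMatrix n) (mul_eq_one_comm.mp hinv)
  simp only [Matrix.mul_assoc, minkMatrix_mul_self, Matrix.mul_one, Matrix.one_mul] at this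
  rw [IsLorentz, Matrix.transpose_transpose, Matrix.mul_assoc]
  exact this

end Lorentz

section LorentzOrbits

variable {n : ℕ}

def IsLorentzInvariant {α : Type*} (f : (Fin (n + 1) → ℝ) → α) : Prop :=
  ∀ Λ, IsLorentz Λ → ∀ ξ, f (Λ *ᵥ ξ) = f ξ

theorem minkowskiForm_isSymm : (minkowskiForm n).IsSymm :=
  ⟨fun x y => by simp only [minkowskiForm_apply, mul_comm]⟩

theorem exists_isLorentz_mulVec_eq {a b : Fin (n + 1) → ℝ}
    (hab : minkowskiForm n a a = minkowskiForm n b b)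
    (hw : minkowskiForm n (a - b) (a - b) ≠ 0) :
    ∃ Λ : Matrix (Fin (n + 1)) (Fin (n + 1)) ℝ, IsLorentz Λ ∧ Λ *ᵥ a = b := by
  set R := Module.preReflection (a - b)
    ((2 / minkowskiForm n (a - b) (a - b)) • minkowskiForm n (a - b))
  refine ⟨LinearMap.toMatrix' R, isLorentz_of_minkowskiForm_mulVec fun x y => ?_, ?_⟩
  · simpa only [LinearMap.toMatrix'_mulVec] using
      minkowskiForm_isSymm.apply_preReflection_preReflection hw x y
  · simpa only [LinearMap.toMatrix'_mulVec] using
      minkowskiForm_isSymm.preReflection_sub_apply hab hw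

theorem IsLorentzInvariant.apply_eq_of_minkowskiForm_eq {α : Type*}
    {f : (Fin (n + 1) → ℝ) → α} (hf : IsLorentzInvariant f) {ξ ζ : Fin (n + 1) → ℝ}
    (h : minkowskiForm n ξ ξ = minkowskiForm n ζ ζ) (hζ : 0 < minkowskiForm n ζ ζ) :
    f ξ = f ζ := by
  have reach : ∀ a b, minkowskiForm n a a = minkowskiForm n b b →
      minkowskiForm n (a - b) (a - b) ≠ 0 → f a = f b := fun a b hab hw => by
    obtain ⟨Λ, hΛ, rfl⟩ := exists_isLorentz_mulVec_eq hab hw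
    exact (hf Λ hΛ a).symm
  have hsq_sub : ∀ a b, minkowskiForm n (a - b) (a - b)
      = minkowskiForm n a a - 2 * minkowskiForm n a b + minkowskiForm n b b := fun a b => by
    simp only [map_sub, LinearMap.sub_apply, minkowskiForm_isSymm.eq b a]
    ring
  have hneg : f (-ζ) = f ζ := reach _ _ (by simp) (by
    rw [hsq_sub]; simp only [map_neg, LinearMap.neg_apply, neg_neg]; linarith)
  -- `ξ - ζ` and `ξ + ζ` cannot both be null: their Minkowski squares add up to `4 q(ζ) > 0`.
  by_cases hw : minkowskiForm n (ξ - ζ) (ξ - ζ) = 0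
  · rw [reach ξ (-ζ) (by simpa using h) (by
      rw [hsq_sub] at hw ⊢; simp only [map_neg, LinearMap.neg_apply, neg_neg]; linarith), hneg]
  · exact reach ξ ζ h hw

end LorentzOrbits

section PolynomialFacts

open Polynomial

theorem Polynomial.coeff_eq_zero_of_odd_of_eval_neg_ofReal {p : ℂ[X]}
    (h : ∀ x : ℝ, p.eval (-x : ℂ) = p.eval (x : ℂ)) {k : ℕ} (hk : Odd k) : p.coeff k = 0 := by
  have hcomp : p.comp (C (-1) * X) = p := by
    refine Polynomial.eq_of_infinite_eval_eq _ _
      ((Set.infinite_range_of_injective Complex.ofReal_injective).mono ?_)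
    rintro _ ⟨x, rfl⟩
    simp [h x]
  have := congrArg (coeff · k) hcomp
  simp only [comp_C_mul_X_coeff, hk.neg_one_pow, mul_neg_one] at this
  linear_combination -this / 2

theorem Polynomial.expand_two_contract {R : Type*} [CommSemiring R] {p : R[X]}
    (h : ∀ k, Odd k → p.coeff k = 0) : expand R 2 (contract 2 p) = p := by
  ext k
  rw [coeff_expand two_pos, coeff_contract two_ne_zero]
  split_ifs with hk
  · rw [Nat.div_mul_cancel hk]
  · exact (h k (Nat.odd_iff.mpr (Nat.two_dvd_ne_zero.mp hk))).symm

theorem MvPolynomial.eq_of_eval_ofReal_eventuallyEq {d : ℕ} {P Q : MvPolynomial (Fin d) ℂ}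
    {ξ₀ : Fin d → ℝ}
    (h : (fun ξ : Fin d → ℝ => MvPolynomial.eval (Complex.ofReal ∘ ξ) P)
      =ᶠ[nhds ξ₀] fun ξ => MvPolynomial.eval (Complex.ofReal ∘ ξ) Q) :
    P = Q := by
  have hana : ∀ R : MvPolynomial (Fin d) ℂ, AnalyticOnNhd ℝ
      (fun ξ : Fin d → ℝ => MvPolynomial.eval (Complex.ofReal ∘ ξ) R) Set.univ := fun R => by
    simpa [Function.comp_def] using AnalyticOnNhd.eval_continuousLinearMap' (𝕜 := ℝ)
      (fun i : Fin d => Complex.ofRealCLM.comp (ContinuousLinearMap.proj (R := ℝ) i)) R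
  have hall := AnalyticOnNhd.eq_of_eventuallyEq (hana P) (hana Q) h
  refine funext_set (fun _ => Set.range Complex.ofReal)
    (fun _ => Set.infinite_range_of_injective Complex.ofReal_injective) fun x hx => ?_
  choose r hr using fun i => hx i trivial
  obtain rfl : x = Complex.ofReal ∘ r := by
    ext i
    exact (hr i).symm
  exact congrFun hall r

theorem MvPolynomial.IsHomogeneous.coeff_degree_div_two_ne_zero {σ R : Type*} [CommSemiring R]
    {Q : MvPolynomial σ R} (hQ : Q.IsHomogeneous 2) {p : R[X]} {β : σ →₀ ℕ}
    (h : MvPolynomial.coeff β (Polynomial.aeval Q p) ≠ 0) : p.coeff (β.degree / 2) ≠ 0 := by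
  contrapose! h
  rw [aeval_eq_sum_range, MvPolynomial.coeff_sum]
  refine Finset.sum_eq_zero fun j _ => ?_
  rw [MvPolynomial.coeff_smul, smul_eq_mul]
  by_cases hj : β.degree = 2 * j
  · rw [show j = β.degree / 2 by omega, h, zero_mul]
  · rw [(hQ.pow j).coeff_eq_zero hj, mul_zero]

end PolynomialFacts

section InvariantPolynomials

variable {n : ℕ} {P : MvPolynomial (Fin (n + 1)) ℂ}

def timeProfile (P : MvPolynomial (Fin (n + 1)) ℂ) : Polynomial ℂ :=
  Polynomial.map (eval 0) (finSuccEquiv ℂ n P)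

def radialProfile (P : MvPolynomial (Fin (n + 1)) ℂ) : Polynomial ℂ :=
  Polynomial.contract 2 (timeProfile P)

theorem eval_timeProfile (P : MvPolynomial (Fin (n + 1)) ℂ) (σ : ℝ) :
    (timeProfile P).eval (σ : ℂ)
      = eval (Complex.ofReal ∘ (Fin.cons σ 0 : Fin (n + 1) → ℝ)) P := by
  rw [timeProfile, ← eval_eq_eval_mv_eval', Fin.comp_cons]
  congr

theorem natDegree_radialProfile_le (P : MvPolynomial (Fin (n + 1)) ℂ) :
    (radialProfile P).natDegree ≤ P.totalDegree / 2 := by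
  refine Polynomial.natDegree_le_iff_coeff_eq_zero.mpr fun j hj => ?_
  have htime : (timeProfile P).natDegree ≤ P.totalDegree :=
    Polynomial.natDegree_map_le.trans ((natDegree_finSuccEquiv P).trans_le
      (degreeOf_le_totalDegree P 0))
  rw [radialProfile, Polynomial.coeff_contract two_ne_zero]
  exact Polynomial.coeff_eq_zero_of_natDegree_lt (by omega)

theorem minkowskiForm_cons_zero (σ : ℝ) :
    minkowskiForm n (Fin.cons σ 0 : Fin (n + 1) → ℝ) (Fin.cons σ 0) = σ ^ 2 := by
  simp [minkowskiForm_apply, sq]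

theorem eval_dAlemPoly (ξ : Fin (n + 1) → ℝ) :
    eval (Complex.ofReal ∘ ξ) (dAlemPoly n) = (minkowskiForm n ξ ξ : ℂ) := by
  simp [dAlemPoly, minkowskiForm_apply, sq]

theorem isHomogeneous_dAlemPoly : (dAlemPoly n).IsHomogeneous 2 :=
  (isHomogeneous_X_pow 0 2).sub (IsHomogeneous.sum _ _ 2 fun j _ => isHomogeneous_X_pow j.succ 2)

theorem isOpen_setOf_minkowskiForm_pos : IsOpen {ξ : Fin (n + 1) → ℝ | 0 < minkowskiForm n ξ ξ} :=
  isOpen_lt continuous_const (by simp only [minkowskiForm_apply]; fun_prop)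

variable (hP : IsLorentzInvariant fun ξ => eval (Complex.ofReal ∘ ξ) P)
include hP

theorem IsLorentzInvariant.expand_radialProfile :
    Polynomial.expand ℂ 2 (radialProfile P) = timeProfile P := by
  refine Polynomial.expand_two_contract fun k hk =>
    Polynomial.coeff_eq_zero_of_odd_of_eval_neg_ofReal (fun σ => ?_) hk
  rcases eq_or_ne σ 0 with rfl | hσ
  · simp
  rw [← Complex.ofReal_neg, eval_timeProfile, eval_timeProfile]
  exact hP.apply_eq_of_minkowskiForm_eq
    (by rw [minkowskiForm_cons_zero, minkowskiForm_cons_zero, neg_sq])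
    (by rw [minkowskiForm_cons_zero]; positivity)

theorem IsLorentzInvariant.eval_eq_radialProfile {ξ : Fin (n + 1) → ℝ}
    (hξ : 0 < minkowskiForm n ξ ξ) :
    eval (Complex.ofReal ∘ ξ) P = (radialProfile P).eval (minkowskiForm n ξ ξ : ℂ) := by
  set σ := √(minkowskiForm n ξ ξ)
  have hσ : minkowskiForm n (Fin.cons σ 0 : Fin (n + 1) → ℝ) (Fin.cons σ 0)
      = minkowskiForm n ξ ξ := by
    rw [minkowskiForm_cons_zero, Real.sq_sqrt hξ.le]
  rw [hP.apply_eq_of_minkowskiForm_eq hσ.symm (hσ ▸ hξ), ← eval_timeProfile,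
    ← hP.expand_radialProfile, Polynomial.expand_eval, ← Complex.ofReal_pow, ← hσ,
    minkowskiForm_cons_zero]

theorem IsLorentzInvariant.eq_aeval_radialProfile :
    P = Polynomial.aeval (dAlemPoly n) (radialProfile P) := by
  refine MvPolynomial.eq_of_eval_ofReal_eventuallyEq (ξ₀ := Fin.cons 1 0) ?_
  filter_upwards [isOpen_setOf_minkowskiForm_pos.mem_nhds (by simp [minkowskiForm_cons_zero])]
    with ξ hξ
  rw [hP.eval_eq_radialProfile hξ, ← eval_dAlemPoly, ← Polynomial.coe_aeval_eq_eval]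
  exact Polynomial.aeval_algHom_apply (MvPolynomial.aeval (Complex.ofReal ∘ ξ)) _ _

end InvariantPolynomials

theorem LorentzInv.isLorentzInvariant_eval_symbolPoly {n m : ℕ} {c : (Fin (n + 1) → ℕ) → ℂ}
    (hL : LorentzInv m (fun β _ => c β)) :
    IsLorentzInvariant fun ξ => eval (Complex.ofReal ∘ ξ) (symbolPoly (n + 1) m c) := by
  intro Λ hΛ ξ
  have h := hL Λᵀ hΛ.transpose (expDot ξ) (smoothFn_expDot ξ) 0
  rw [opApply_eq_diffOp, opApply_eq_diffOp, expDot_comp_mulVec, Matrix.transpose_transpose,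
    diffOp_expDot, diffOp_expDot] at h
  simpa [expDot_zero] using h.symm

/-- A Lorentz invariant constant-coefficient operator of order `m`
(whose top-order coefficients are not all zero) is a polynomial in the d'Alembertian
of degree `⌊m/2⌋` with nonzero leading coefficient. -/
theorem lorentz_invariant_constant_coeff_is_poly_in_dalembertian (n m : ℕ)
    (c : (Fin (n + 1) → ℕ) → ℂ)
    (htop : ∃ β ∈ mIdx (n + 1) m, (∑ i, β i) = m ∧ c β ≠ 0)
    (hL : LorentzInv m (fun β _ => c β)) :
    ∃ b : ℕ → ℂ, b (m / 2) ≠ 0 ∧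
      ∀ u : (Fin (n + 1) → ℝ) → ℂ, SmoothFn u → ∀ x,
        opApply m (fun β _ => c β) u x
          = ∑ j ∈ Finset.range (m / 2 + 1), b j * dAlem^[j] u x := by
  obtain ⟨β, hβ, hdeg, hcβ⟩ := htop
  set P := symbolPoly (n + 1) m c
  have hP : P = Polynomial.aeval (dAlemPoly n) (radialProfile P) :=
    hL.isLorentzInvariant_eval_symbolPoly.eq_aeval_radialProfile
  have hdegP : (radialProfile P).natDegree < m / 2 + 1 := Nat.lt_succ_of_le
    ((natDegree_radialProfile_le P).trans (Nat.div_le_div_right (totalDegree_symbolPoly_le m c)))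
  refine ⟨(radialProfile P).coeff, ?_, fun u hu x => ?_⟩
  · have := isHomogeneous_dAlemPoly.coeff_degree_div_two_ne_zero
      (β := Finsupp.equivFunOnFinite.symm β) (by rwa [← hP, coeff_symbolPoly c hβ])
    rwa [Finsupp.degree_eq_sum, Finsupp.coe_equivFunOnFinite_symm, hdeg] at this
  · have hdiffOp : diffOp u P
        = ∑ j ∈ Finset.range (m / 2 + 1), (radialProfile P).coeff j • dAlem^[j] u := by
      conv_lhs => rw [hP, Polynomial.aeval_eq_sum_range' hdegP]
      simp [dAlem_iterate_eq_diffOp hu]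
    simpa [opApply_eq_diffOp] using congrFun hdiffOp x
end
end

section
/- Let ℓ be an even nonnegative integer and let p be a homogeneous polynomial of degree ℓ with complex coefficients in the variables ξ = (τ, ξ⃗) ∈ ℝ×ℝⁿ that is Lorentz invariant, i.e. p(Λξ) = p(ξ) for all Λ ∈ O(1,n) and all ξ. Then there exists b ∈ ℂ such that p(τ, ξ⃗) = b(τ² − |ξ⃗|²)^{ℓ/2} for all (τ, ξ⃗) ∈ ℝ×ℝⁿ. -/
open scoped BigOperators

noncomputable section

/-- Evaluation of a polynomial with complex coefficients at a real point of `ℝ × ℝⁿ`. -/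
def evalR {n : ℕ} (p : MvPolynomial (Fin (n + 1)) ℂ) (ξ : Fin (n + 1) → ℝ) : ℂ :=
  MvPolynomial.eval (fun i => (ξ i : ℂ)) p

/-- A polynomial in `ξ = (τ, ξ⃗) ∈ ℝ × ℝⁿ` is Lorentz invariant if `p(Λξ) = p(ξ)` for all
`Λ ∈ O(1,n)`. -/
def LorentzInvPoly {n : ℕ} (p : MvPolynomial (Fin (n + 1)) ℂ) : Prop :=
  ∀ Λ : Matrix (Fin (n + 1)) (Fin (n + 1)) ℝ, IsLorentz Λ →
    ∀ ξ : Fin (n + 1) → ℝ, evalR p (Λ.mulVec ξ) = evalR p ξ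

/-- The Minkowski quadratic form `τ² - |ξ⃗|²` of `ξ = (τ, ξ⃗)`, as a complex number. -/
def minkForm {n : ℕ} (ξ : Fin (n + 1) → ℝ) : ℂ :=
  (ξ 0 : ℂ) ^ 2 - ∑ j : Fin n, (ξ j.succ : ℂ) ^ 2

/-!
A forward timelike `ξ` with Minkowski square `⟨ξ, ξ⟩ = τ² - |ξ⃗|² = s²` is the image of `-s e₀`
under the Minkowski reflection in the non-null vector `-s e₀ - ξ`, which lies in `O(1,n)`.
Invariance and homogeneity therefore give `p ξ = (-s)^ℓ p(e₀) = p(e₀) ⟨ξ, ξ⟩^(ℓ/2)` on the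
forward cone. For fixed `ξ⃗` both sides are polynomials in `τ` agreeing for all large `τ`, so the
identity holds everywhere.
-/

open MvPolynomial

theorem MvPolynomial.IsHomogeneous.eval_smul {R σ : Type*} [CommSemiring R] {φ : MvPolynomial σ R}
    {n : ℕ} (hφ : φ.IsHomogeneous n) (c : R) (x : σ → R) :
    eval (c • x) φ = c ^ n * eval x φ := by
  rw [φ.as_sum, map_sum, map_sum, Finset.mul_sum]
  refine Finset.sum_congr rfl fun d hd => ?_
  simp only [eval_monomial, Pi.smul_apply, smul_eq_mul, mul_pow, Finsupp.prod,
    Finset.prod_mul_distrib, Finset.prod_pow_eq_pow_sum, ← hφ.degree_eq_sum_deg_support hd]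
  ring

variable {n : ℕ}

theorem evalR_smul {p : MvPolynomial (Fin (n + 1)) ℂ} {ℓ : ℕ} (hp : p.IsHomogeneous ℓ) (c : ℝ)
    (ξ : Fin (n + 1) → ℝ) : evalR p (c • ξ) = (c : ℂ) ^ ℓ * evalR p ξ := by
  rw [evalR, evalR, ← hp.eval_smul]
  congr 2
  funext i
  simp

def minkBilin (n : ℕ) : LinearMap.BilinForm ℝ (Fin (n + 1) → ℝ) :=
  Matrix.toBilin' (minkMatrix n)

theorem minkBilin_apply (x y : Fin (n + 1) → ℝ) :
    minkBilin n x y = x 0 * y 0 - ∑ j : Fin n, x j.succ * y j.succ := by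
  simp [minkBilin, minkMatrix, Matrix.toBilin'_apply', dotProduct, Fin.sum_univ_succ,
    Matrix.mulVec_diagonal, sub_eq_add_neg]

theorem minkBilin_isSymm : LinearMap.IsSymm (minkBilin n) :=
  LinearMap.BilinForm.isSymm_iff.mp <|
    Matrix.isSymm_toBilin'_iff_isSymm.mpr (Matrix.isSymm_diagonal _)

theorem minkForm_eq_minkBilin (ξ : Fin (n + 1) → ℝ) : minkForm ξ = (minkBilin n ξ ξ : ℂ) := by
  simp [minkForm, minkBilin_apply, sq]

theorem isLorentz_iff_isOrthogonal {Λ : Matrix (Fin (n + 1)) (Fin (n + 1)) ℝ} :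
    IsLorentz Λ ↔ (minkBilin n).IsOrthogonal (Matrix.toLin' Λ) := by
  rw [IsLorentz, ← Matrix.toBilin'.injective.eq_iff, ← Matrix.toBilin'_comp]
  exact LinearMap.ext_iff₂

theorem exists_isLorentz_mulVec_eq_s8 {x y : Fin (n + 1) → ℝ}
    (hxy : minkBilin n x x = minkBilin n y y) (hw : minkBilin n (x - y) (x - y) ≠ 0) :
    ∃ Λ, IsLorentz Λ ∧ Λ.mulVec x = y := by
  have hrefl : (minkBilin n).IsReflective (x - y) := .of_dvd_two _ (Ne.isUnit hw).dvd
  refine ⟨LinearMap.toMatrix' (Module.reflection hrefl.coroot_apply_self).toLinearMap, ?_, ?_⟩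
  · rw [isLorentz_iff_isOrthogonal, Matrix.toLin'_toMatrix']
    exact hrefl.isOrthogonal_reflection _ minkBilin_isSymm
  · have hcoroot : hrefl.coroot _ x = 1 := by
      refine hrefl.regular.left ?_
      simp only [LinearMap.IsReflective.apply_self_mul_coroot_apply, mul_one]
      have hsymm : minkBilin n y x = minkBilin n x y := minkBilin_isSymm.eq y x
      simp only [map_sub, LinearMap.sub_apply]
      linear_combination hxy - hsymm
    rw [LinearMap.toMatrix'_mulVec, LinearEquiv.coe_coe, Module.reflection_apply, hcoroot, one_smul,
      sub_sub_cancel]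

theorem LorentzInvPoly.evalR_eq_mul_minkForm_pow {p : MvPolynomial (Fin (n + 1)) ℂ} {m : ℕ}
    (hinv : LorentzInvPoly p) (hp : p.IsHomogeneous (2 * m)) {ξ : Fin (n + 1) → ℝ}
    (hξ : √(∑ j : Fin n, ξ j.succ ^ 2) < ξ 0) :
    evalR p ξ = evalR p (Pi.single 0 1) * minkForm ξ ^ m := by
  set r2 := ∑ j : Fin n, ξ j.succ ^ 2
  have ht : 0 < ξ 0 := (Real.sqrt_nonneg _).trans_lt hξ
  have hr2t : r2 < ξ 0 ^ 2 := (Real.sqrt_lt' ht).mp hξ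
  set s := √(ξ 0 ^ 2 - r2)
  have hs : 0 < s := Real.sqrt_pos.mpr (by linarith)
  have hs2 : s ^ 2 = ξ 0 ^ 2 - r2 := Real.sq_sqrt (by linarith)
  -- Reflecting `-s e₀` rather than `s e₀` keeps the mirror `x - ξ` non-null even when `ξ⃗ = 0`;
  -- the sign is harmless because the degree is even.
  set x : Fin (n + 1) → ℝ := (-s) • Pi.single 0 1
  have hr2_sum : ∑ j : Fin n, ξ j.succ * ξ j.succ = r2 := by simp only [r2, sq]
  have hξξ : minkBilin n ξ ξ = ξ 0 ^ 2 - r2 := by rw [minkBilin_apply, hr2_sum, sq]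
  have hxx : minkBilin n x x = s ^ 2 := by
    simp [minkBilin_apply, x, sq]
  have hxξ : minkBilin n (x - ξ) (x - ξ) = 2 * s * (s + ξ 0) := by
    simp [minkBilin_apply, x, hr2_sum]
    linear_combination (-1 : ℝ) * hs2
  obtain ⟨Λ, hΛ, hΛx⟩ := exists_isLorentz_mulVec_eq_s8 (hxx.trans (hs2.trans hξξ.symm))
    (by rw [hxξ]; positivity)
  calc evalR p ξ = evalR p x := by rw [← hΛx, hinv Λ hΛ]
    _ = ((s : ℂ) ^ 2) ^ m * evalR p (Pi.single 0 1) := by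
      rw [evalR_smul hp, pow_mul, Complex.ofReal_neg, neg_sq]
    _ = evalR p (Pi.single 0 1) * minkForm ξ ^ m := by
      rw [minkForm_eq_minkBilin, hξξ, ← hs2, mul_comm]
      push_cast
      rfl

theorem evalR_eq_of_eqOn_forwardCone {p q : MvPolynomial (Fin (n + 1)) ℂ}
    (h : ∀ ξ : Fin (n + 1) → ℝ, √(∑ j : Fin n, ξ j.succ ^ 2) < ξ 0 → evalR p ξ = evalR q ξ)
    (ξ : Fin (n + 1) → ℝ) : evalR p ξ = evalR q ξ := by
  set F := Polynomial.map (eval fun j => (ξ j.succ : ℂ)) (finSuccEquiv ℂ n (p - q))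
  have hF : ∀ t : ℝ, F.eval (t : ℂ) = evalR (p - q) (Fin.cons t (Fin.tail ξ)) := fun t => by
    rw [evalR, ← Function.comp_def Complex.ofReal, Fin.comp_cons, eval_eq_eval_mv_eval']
    rfl
  have hF0 : F = 0 := by
    refine F.eq_zero_of_infinite_isRoot <|
      ((Set.Ioi_infinite √(∑ j : Fin n, ξ j.succ ^ 2)).image Complex.ofReal_injective.injOn).mono ?_
    rintro _ ⟨t, ht, rfl⟩
    rw [Set.mem_ofPred_eq, Polynomial.IsRoot, hF, evalR, map_sub, sub_eq_zero]
    exact h _ (by simpa [Fin.tail] using ht)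
  have := hF (ξ 0)
  rw [hF0, Fin.cons_self_tail, Polynomial.eval_zero, evalR, map_sub] at this
  exact sub_eq_zero.mp this.symm

def minkPoly (n : ℕ) : MvPolynomial (Fin (n + 1)) ℂ :=
  X 0 ^ 2 - ∑ j : Fin n, X j.succ ^ 2

theorem evalR_minkPoly (ξ : Fin (n + 1) → ℝ) : evalR (minkPoly n) ξ = minkForm ξ := by
  simp [evalR, minkPoly, minkForm]

/-- A Lorentz invariant homogeneous polynomial of even degree `ℓ` in
`ξ = (τ, ξ⃗) ∈ ℝ × ℝⁿ` equals `b (τ² - |ξ⃗|²)^{ℓ/2}` for some `b ∈ ℂ`. -/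
theorem lorentz_invariant_homogeneous_even (n ℓ : ℕ) (hℓ : Even ℓ)
    (p : MvPolynomial (Fin (n + 1)) ℂ) (hp : p.IsHomogeneous ℓ)
    (hinv : LorentzInvPoly p) :
    ∃ b : ℂ, ∀ ξ : Fin (n + 1) → ℝ, evalR p ξ = b * (minkForm ξ) ^ (ℓ / 2) := by
  obtain ⟨m, rfl⟩ := hℓ
  rw [← two_mul] at hp
  set b := evalR p (Pi.single 0 1)
  have hq : ∀ ξ, evalR (C b * minkPoly n ^ m) ξ = b * minkForm ξ ^ m := fun ξ => by
    rw [← evalR_minkPoly]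
    simp [evalR]
  refine ⟨b, fun ξ => ?_⟩
  rw [← two_mul, Nat.mul_div_cancel_left m two_pos, ← hq]
  refine evalR_eq_of_eqOn_forwardCone (fun ξ hξ => ?_) ξ
  rw [hq, hinv.evalR_eq_mul_minkForm_pow hp hξ]
end
end

section
/- Let p be a polynomial of degree at most m with complex coefficients in the variables ξ = (τ, ξ⃗) ∈ ℝ×ℝⁿ that is Lorentz invariant, i.e. p(Λξ) = p(ξ) for all Λ ∈ O(1,n) and all ξ. Then there exist complex numbers b_0, …, b_{⌊m/2⌋} such that p(τ, ξ⃗) = ∑_{j=0}^{⌊m/2⌋} b_j (τ² − |ξ⃗|²)^j for all (τ, ξ⃗) ∈ ℝ×ℝⁿ; that is, p is a polynomial in the Minkowski form τ² − |ξ⃗|² of degree at most ⌊m/2⌋. -/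
open scoped BigOperators

noncomputable section

/-!
The matrix `-1` is Lorentz, so the restriction `q(t) = p(t, 0, …, 0)` is even and hence
`q(t) = ∑ bⱼ t^(2j)` with `deg q ≤ m`. Every `ξ` in the open past timelike cone has the same
Minkowski norm `s² = τ² - |ξ⃗|²` as `(s, 0, …, 0)`, and the Minkowski reflection in the
non-isotropic vector `(s, 0, …, 0) - ξ` maps one to the other; so `p(ξ) = q(s) = ∑ bⱼ (s²)^j`
on that cone. Both sides are polynomials, hence real-analytic, and agree on an open set, so they
agree everywhere.
-/

namespace Matrix

variable {ι K : Type*} [Fintype ι] [DecidableEq ι] [Field K] {G : Matrix ι ι K}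

def reflectionMatrix (G : Matrix ι ι K) (u : ι → K) : Matrix ι ι K :=
  1 - (2 / (u ⬝ᵥ G *ᵥ u)) • vecMulVec u (G *ᵥ u)

theorem reflectionMatrix_transpose_mul_mul (hG : G.IsSymm) {u : ι → K}
    (hu : u ⬝ᵥ G *ᵥ u ≠ 0) :
    (reflectionMatrix G u)ᵀ * G * reflectionMatrix G u = G := by
  have hc : 2 / (u ⬝ᵥ G *ᵥ u) * (u ⬝ᵥ G *ᵥ u) = 2 := div_mul_cancel₀ 2 hu
  have hGu : u ᵥ* G = G *ᵥ u := by rw [← mulVec_transpose, hG.eq]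
  have hleft : vecMulVec (G *ᵥ u) u * G = vecMulVec (G *ᵥ u) (G *ᵥ u) := by
    rw [vecMulVec_mul, hGu]
  have hright : G * vecMulVec u (G *ᵥ u) = vecMulVec (G *ᵥ u) (G *ᵥ u) := by
    rw [mul_vecMulVec]
  have hsq : vecMulVec (G *ᵥ u) (G *ᵥ u) * vecMulVec u (G *ᵥ u) =
      (u ⬝ᵥ G *ᵥ u) • vecMulVec (G *ᵥ u) (G *ᵥ u) := by
    rw [vecMulVec_mul_vecMulVec, dotProduct_comm, vecMulVec_smul]
  simp only [reflectionMatrix, transpose_sub, transpose_one, transpose_smul, transpose_vecMulVec,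
    sub_mul, mul_sub, one_mul, mul_one, smul_mul, mul_smul_comm, hleft, hright, hsq]
  linear_combination (norm := module) (2 / (u ⬝ᵥ G *ᵥ u) * hc) • vecMulVec (G *ᵥ u) (G *ᵥ u)

theorem reflectionMatrix_mulVec (G : Matrix ι ι K) (u x : ι → K) :
    reflectionMatrix G u *ᵥ x = x - (2 / (u ⬝ᵥ G *ᵥ u) * (G *ᵥ u ⬝ᵥ x)) • u := by
  simp [reflectionMatrix, sub_mulVec, smul_mulVec, vecMulVec_mulVec, smul_smul]

theorem exists_transpose_mul_mul_eq_and_mulVec_eq (hG : G.IsSymm) {x y : ι → K}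
    (hxy : x ⬝ᵥ G *ᵥ x = y ⬝ᵥ G *ᵥ y) (hu : (x - y) ⬝ᵥ G *ᵥ (x - y) ≠ 0) :
    ∃ Λ : Matrix ι ι K, Λᵀ * G * Λ = G ∧ Λ *ᵥ x = y := by
  refine ⟨reflectionMatrix G (x - y), reflectionMatrix_transpose_mul_mul hG hu, ?_⟩
  have hsymm : y ⬝ᵥ G *ᵥ x = x ⬝ᵥ G *ᵥ y := by
    rw [dotProduct_comm, dotProduct_mulVec, ← mulVec_transpose, hG.eq]
  have hcoeff : 2 * (G *ᵥ (x - y) ⬝ᵥ x) = (x - y) ⬝ᵥ G *ᵥ (x - y) := by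
    simp only [dotProduct_comm _ x, mulVec_sub, dotProduct_sub, sub_dotProduct, hsymm, hxy]
    ring
  have hne : (2 : K) ≠ 0 ∧ G *ᵥ (x - y) ⬝ᵥ x ≠ 0 := mul_ne_zero_iff.mp (hcoeff ▸ hu)
  rw [reflectionMatrix_mulVec, ← hcoeff, div_mul_cancel_left₀ hne.1, inv_mul_cancel₀ hne.2,
    one_smul, sub_sub_cancel]

end Matrix

namespace Polynomial

theorem eval_add_eval_neg {R : Type*} [CommRing R] (q : R[X]) {N : ℕ}
    (hN : q.natDegree < 2 * N) (s : R) :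
    q.eval s + q.eval (-s) = 2 * ∑ j ∈ Finset.range N, q.coeff (2 * j) * (s ^ 2) ^ j := by
  rw [eval_eq_sum_range' hN, eval_eq_sum_range' hN, ← Finset.sum_add_distrib, Finset.mul_sum]
  clear hN
  induction N with
  | zero => simp
  | succ N ih =>
    rw [Nat.mul_succ, Finset.sum_range_succ, Finset.sum_range_succ, Finset.sum_range_succ, ih,
      Odd.neg_pow ⟨N, rfl⟩, Even.neg_pow ⟨N, by ring⟩, ← pow_mul]
    ring

end Polynomial

section Minkowski

open Matrix

variable {n : ℕ}

def minkQuad (ξ : Fin (n + 1) → ℝ) : ℝ :=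
  ξ ⬝ᵥ minkMatrix n *ᵥ ξ

theorem minkQuad_eq (ξ : Fin (n + 1) → ℝ) :
    minkQuad ξ = ξ 0 ^ 2 - ∑ j : Fin n, ξ j.succ ^ 2 := by
  simp [minkQuad, minkMatrix, Matrix.mulVec_diagonal, dotProduct, Fin.sum_univ_succ, sq]
  ring

theorem ofReal_minkQuad (ξ : Fin (n + 1) → ℝ) : (minkQuad ξ : ℂ) = minkForm ξ := by
  simp [minkQuad_eq, minkForm]

def pastTimelikeCone (n : ℕ) : Set (Fin (n + 1) → ℝ) :=
  {ξ | ξ 0 < 0 ∧ 0 < minkQuad ξ}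

theorem isOpen_pastTimelikeCone : IsOpen (pastTimelikeCone n) :=
  (isOpen_lt (continuous_apply 0) continuous_const).inter
    (isOpen_lt continuous_const (show Continuous fun ξ ↦ ξ ⬝ᵥ minkMatrix n *ᵥ ξ by fun_prop))

theorem cons_neg_one_zero_mem_pastTimelikeCone :
    (Fin.cons (-1) 0 : Fin (n + 1) → ℝ) ∈ pastTimelikeCone n := by
  simp [pastTimelikeCone, minkQuad_eq]

theorem isSymm_minkMatrix : (minkMatrix n).IsSymm :=
  Matrix.isSymm_diagonal _

theorem isLorentz_neg_one : IsLorentz (-1 : Matrix (Fin (n + 1)) (Fin (n + 1)) ℝ) := by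
  simp [IsLorentz]

theorem exists_isLorentz_mulVec_cons_sqrt {ξ : Fin (n + 1) → ℝ} (hξ : ξ ∈ pastTimelikeCone n) :
    ∃ Λ, IsLorentz Λ ∧ Λ *ᵥ Fin.cons √(minkQuad ξ) 0 = ξ := by
  obtain ⟨h0, hQ⟩ := hξ
  set s := √(minkQuad ξ)
  have hs : 0 < s := Real.sqrt_pos.mpr hQ
  have hs2 : s ^ 2 = minkQuad ξ := Real.sq_sqrt hQ.le
  refine Matrix.exists_transpose_mul_mul_eq_and_mulVec_eq isSymm_minkMatrix ?_ ?_
  · change minkQuad _ = minkQuad _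
    simpa [minkQuad_eq] using hs2
  · have hdiff : minkQuad (Fin.cons s 0 - ξ) = 2 * s * (s - ξ 0) := by
      rw [minkQuad_eq] at hs2 ⊢
      simp only [Pi.sub_apply, Fin.cons_zero, Fin.cons_succ, Pi.zero_apply, zero_sub, neg_sq]
      linear_combination (-1) * hs2
    change minkQuad _ ≠ 0
    rw [hdiff]
    exact (mul_pos (mul_pos two_pos hs) (by linarith)).ne'

end Minkowski

section Polynomials

open MvPolynomial

variable {n : ℕ}

theorem analyticOnNhd_evalR (p : MvPolynomial (Fin (n + 1)) ℂ) :
    AnalyticOnNhd ℝ (evalR p) Set.univ := fun ξ _ ↦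
  -- `(… :)` elaborates the term before unifying with `evalR p`; the other order gets lost in the
  -- two normed-space structures on `ℂ` over `ℝ`
  (AnalyticAt.aeval_mvPolynomial (A := ℂ)
    (fun i ↦ (Complex.ofRealCLM.comp (ContinuousLinearMap.proj i)).analyticAt ξ) p :)

theorem evalR_eq_of_eventuallyEq {p q : MvPolynomial (Fin (n + 1)) ℂ} {ξ₀ : Fin (n + 1) → ℝ}
    (h : evalR p =ᶠ[nhds ξ₀] evalR q) : evalR p = evalR q :=
  (analyticOnNhd_evalR p).eq_of_eventuallyEq (analyticOnNhd_evalR q) h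

def timeAxisPoly (p : MvPolynomial (Fin (n + 1)) ℂ) : Polynomial ℂ :=
  (finSuccEquiv ℂ n p).map (eval 0)

theorem natDegree_timeAxisPoly_le (p : MvPolynomial (Fin (n + 1)) ℂ) :
    (timeAxisPoly p).natDegree ≤ p.totalDegree :=
  Polynomial.natDegree_map_le.trans
    ((natDegree_finSuccEquiv p).trans_le (degreeOf_le_totalDegree p 0))

theorem evalR_cons_zero (p : MvPolynomial (Fin (n + 1)) ℂ) (t : ℝ) :
    evalR p (Fin.cons t 0) = (timeAxisPoly p).eval (t : ℂ) := by
  rw [timeAxisPoly, ← eval_eq_eval_mv_eval', evalR]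
  congr
  funext i
  cases i using Fin.cases <;> simp

theorem LorentzInvPoly.evalR_neg {p : MvPolynomial (Fin (n + 1)) ℂ} (hinv : LorentzInvPoly p)
    (ξ : Fin (n + 1) → ℝ) : evalR p (-ξ) = evalR p ξ := by
  simpa [Matrix.neg_mulVec] using hinv (-1) isLorentz_neg_one ξ

theorem LorentzInvPoly.evalR_eq_sum_of_mem_pastTimelikeCone {m : ℕ}
    {p : MvPolynomial (Fin (n + 1)) ℂ} (hdeg : p.totalDegree ≤ m) (hinv : LorentzInvPoly p)
    {ξ : Fin (n + 1) → ℝ} (hξ : ξ ∈ pastTimelikeCone n) :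
    evalR p ξ =
      ∑ j ∈ Finset.range (m / 2 + 1), (timeAxisPoly p).coeff (2 * j) * minkForm ξ ^ j := by
  obtain ⟨Λ, hΛ, hΛξ⟩ := exists_isLorentz_mulVec_cons_sqrt hξ
  set s := √(minkQuad ξ)
  have hs2 : (s : ℂ) ^ 2 = minkForm ξ := by
    rw [← Complex.ofReal_pow, Real.sq_sqrt hξ.2.le, ofReal_minkQuad]
  have hneg : evalR p (Fin.cons (-s) 0) = evalR p (Fin.cons s 0) := by
    rw [← hinv.evalR_neg]
    congr
    ext i
    cases i using Fin.cases <;> simp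
  have hsum := (timeAxisPoly p).eval_add_eval_neg
    ((natDegree_timeAxisPoly_le p).trans_lt (by omega : p.totalDegree < 2 * (m / 2 + 1)))
    (s : ℂ)
  rw [← evalR_cons_zero, ← Complex.ofReal_neg, ← evalR_cons_zero, hneg, ← two_mul, hs2] at hsum
  rw [← hinv Λ hΛ, hΛξ] at hsum
  exact mul_left_cancel₀ two_ne_zero hsum

end Polynomials

/-- A Lorentz invariant polynomial of degree at most `m` in
`ξ = (τ, ξ⃗) ∈ ℝ × ℝⁿ` is a polynomial of degree at most `⌊m/2⌋` in the Minkowski form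
`τ² - |ξ⃗|²`. -/
theorem lorentz_invariant_poly (n m : ℕ)
    (p : MvPolynomial (Fin (n + 1)) ℂ) (hdeg : p.totalDegree ≤ m)
    (hinv : LorentzInvPoly p) :
    ∃ b : ℕ → ℂ, ∀ ξ : Fin (n + 1) → ℝ,
      evalR p ξ = ∑ j ∈ Finset.range (m / 2 + 1), b j * (minkForm ξ) ^ j := by
  set b : ℕ → ℂ := fun j ↦ (timeAxisPoly p).coeff (2 * j)
  set P : MvPolynomial (Fin (n + 1)) ℂ :=
    ∑ j ∈ Finset.range (m / 2 + 1), MvPolynomial.C (b j) * minkPoly n ^ j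
  have hP : ∀ ξ, evalR P ξ = ∑ j ∈ Finset.range (m / 2 + 1), b j * minkForm ξ ^ j := by
    intro ξ
    simp [P, evalR, ← evalR_minkPoly]
  have hcone : evalR p =ᶠ[nhds (Fin.cons (-1) 0)] evalR P := by
    filter_upwards [isOpen_pastTimelikeCone.mem_nhds cons_neg_one_zero_mem_pastTimelikeCone]
      with ξ hξ
    rw [hP]
    exact hinv.evalR_eq_sum_of_mem_pastTimelikeCone hdeg hξ
  exact ⟨b, fun ξ ↦ (congrFun (evalR_eq_of_eventuallyEq hcone) ξ).trans (hP ξ)⟩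
end
end

section
/- Let p be a polynomial of degree at most m with complex coefficients in x ∈ ℝⁿ that is rotation invariant, i.e. p(Rx) = p(x) for all R ∈ O(n) and all x ∈ ℝⁿ. Then there exist complex numbers b_0, …, b_{⌊m/2⌋} such that p(x) = ∑_{k=0}^{⌊m/2⌋} b_k |x|^{2k} for all x ∈ ℝⁿ; that is, p is a polynomial in |x|² of degree at most ⌊m/2⌋. -/
open scoped BigOperators

noncomputable section

/-- Membership in the orthogonal group `O(n)`:  `ᵗR R = I`. -/
def IsOrth {n : ℕ} (R : Matrix (Fin n) (Fin n) ℝ) : Prop :=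
  R.transpose * R = 1

/-- Evaluation of a polynomial with complex coefficients at a real point of `ℝⁿ`. -/
def evalRE {n : ℕ} (p : MvPolynomial (Fin n) ℂ) (x : Fin n → ℝ) : ℂ :=
  MvPolynomial.eval (fun i => (x i : ℂ)) p

/-- A polynomial in `x ∈ ℝⁿ` is rotation invariant if `p(Rx) = p(x)` for all `R ∈ O(n)`. -/
def RotInvPoly {n : ℕ} (p : MvPolynomial (Fin n) ℂ) : Prop :=
  ∀ R : Matrix (Fin n) (Fin n) ℝ, IsOrth R →
    ∀ x : Fin n → ℝ, evalRE p (R.mulVec x) = evalRE p x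

/-!
The orthogonal group acts transitively on each sphere (the reflection in the hyperplane
orthogonal to `x - y` swaps two vectors of equal length), so a rotation invariant `p` satisfies
`p(x) = Q(|x|)`, where `Q(t) = p(t e₀)` is the restriction of `p` to a coordinate axis and has
degree at most `m`. As `t e₀` and `-t e₀` have the same length, `Q` is even, so only its even
coefficients contribute and `Q(|x|) = ∑_{k ≤ m/2} Q_{2k} |x|^{2k}`.
-/

open Finset Matrix Polynomial

theorem Finset.sum_range_two_mul {M : Type*} [AddCommMonoid M] (f : ℕ → M) (N : ℕ) :
    ∑ j ∈ range (2 * N), f j = ∑ k ∈ range N, (f (2 * k) + f (2 * k + 1)) := by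
  induction N with
  | zero => simp
  | succ N ih => rw [Nat.mul_succ, sum_range_succ, sum_range_succ, sum_range_succ, ih, add_assoc]

namespace Polynomial

variable {R : Type*} [CommRing R]

theorem eval_add_eval_neg_s15 {Q : R[X]} {N : ℕ} (hQ : Q.natDegree < 2 * N) (c : R) :
    Q.eval c + Q.eval (-c) = 2 * ∑ k ∈ range N, Q.coeff (2 * k) * (c ^ 2) ^ k := by
  rw [eval_eq_sum_range' hQ, eval_eq_sum_range' hQ, ← sum_add_distrib, sum_range_two_mul,
    mul_sum]
  refine sum_congr rfl fun k _ => ?_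
  rw [(even_two_mul k).neg_pow, (odd_two_mul_add_one k).neg_pow, pow_mul]
  ring

theorem eval_eq_sum_range_coeff_two_mul [IsDomain R] [NeZero (2 : R)] {Q : R[X]} {N : ℕ}
    (hQ : Q.natDegree < 2 * N) {c : R} (heven : Q.eval (-c) = Q.eval c) :
    Q.eval c = ∑ k ∈ range N, Q.coeff (2 * k) * (c ^ 2) ^ k :=
  mul_left_cancel₀ two_ne_zero <| by rw [← eval_add_eval_neg_s15 hQ, heven, two_mul]

end Polynomial

theorem LinearIsometryEquiv.exists_isOrth_mulVec_eq {n : ℕ}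
    (f : EuclideanSpace ℝ (Fin n) ≃ₗᵢ[ℝ] EuclideanSpace ℝ (Fin n)) :
    ∃ R : Matrix (Fin n) (Fin n) ℝ, IsOrth R ∧ ∀ x, R *ᵥ x = (f (WithLp.toLp 2 x)).ofLp := by
  set b := EuclideanSpace.basisFun (Fin n) ℝ
  exact ⟨f.toLinearEquiv.toLinearMap.toMatrix b.toBasis b.toBasis,
    (mem_orthogonalGroup_iff' _ _).1 (f.toMatrix_mem_unitaryGroup b b),
    fun x => LinearMap.toMatrix_mulVec_repr b.toBasis b.toBasis f.toLinearEquiv.toLinearMap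
      (WithLp.toLp 2 x)⟩

theorem exists_isOrth_mulVec_eq_of_norm_eq {n : ℕ} {x y : Fin n → ℝ}
    (h : ‖WithLp.toLp 2 x‖ = ‖WithLp.toLp 2 y‖) :
    ∃ R : Matrix (Fin n) (Fin n) ℝ, IsOrth R ∧ R *ᵥ x = y := by
  obtain ⟨R, hR, hRf⟩ :=
    (Submodule.span ℝ {WithLp.toLp 2 x - WithLp.toLp 2 y})ᗮ.reflection.exists_isOrth_mulVec_eq
  exact ⟨R, hR, by rw [hRf, Submodule.reflection_sub h]⟩

theorem RotInvPoly.evalRE_eq_of_norm_eq {n : ℕ} {p : MvPolynomial (Fin n) ℂ} (hp : RotInvPoly p)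
    {x y : Fin n → ℝ} (h : ‖WithLp.toLp 2 x‖ = ‖WithLp.toLp 2 y‖) : evalRE p x = evalRE p y := by
  obtain ⟨R, hR, rfl⟩ := exists_isOrth_mulVec_eq_of_norm_eq h.symm
  exact hp R hR y

namespace MvPolynomial

variable {R σ : Type*} [CommSemiring R] [DecidableEq σ]

def axisPoly (p : MvPolynomial σ R) (i : σ) : R[X] :=
  aeval (Pi.single i Polynomial.X) p

theorem eval_axisPoly (p : MvPolynomial σ R) (i : σ) (c : R) :
    (p.axisPoly i).eval c = eval (Pi.single i c) p := by
  have h : (fun j => Polynomial.aeval c ((Pi.single i Polynomial.X : σ → R[X]) j)) =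
      Pi.single i c := by
    ext j
    rcases eq_or_ne j i with rfl | hj <;> simp [*]
  rw [axisPoly, ← Polynomial.coe_aeval_eq_eval, ← AlgHom.comp_apply, comp_aeval, h]
  rfl

theorem natDegree_axisPoly_le (p : MvPolynomial σ R) (i : σ) :
    (p.axisPoly i).natDegree ≤ p.totalDegree := by
  simpa [axisPoly] using aeval_natDegree_le (n := 1) p le_rfl (Pi.single i Polynomial.X) fun j => by
    rcases eq_or_ne j i with rfl | hj <;> simp [natDegree_X_le, *]

end MvPolynomial

theorem evalRE_single {n : ℕ} (p : MvPolynomial (Fin n) ℂ) (i : Fin n) (t : ℝ) :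
    evalRE p (Pi.single i t) = (p.axisPoly i).eval (t : ℂ) := by
  rw [evalRE, MvPolynomial.eval_axisPoly]
  congr
  ext j
  rcases eq_or_ne j i with rfl | hj <;> simp [*]

namespace RotInvPoly

variable {n : ℕ} {p : MvPolynomial (Fin n) ℂ}

theorem evalRE_eq_eval_axisPoly_norm (hp : RotInvPoly p) (i : Fin n) (x : Fin n → ℝ) :
    evalRE p x = (p.axisPoly i).eval (‖WithLp.toLp 2 x‖ : ℂ) := by
  rw [← evalRE_single]
  exact hp.evalRE_eq_of_norm_eq (by simp)

theorem eval_axisPoly_neg (hp : RotInvPoly p) (i : Fin n) (t : ℝ) :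
    (p.axisPoly i).eval (-(t : ℂ)) = (p.axisPoly i).eval (t : ℂ) := by
  rw [← Complex.ofReal_neg, ← evalRE_single, ← evalRE_single]
  exact hp.evalRE_eq_of_norm_eq (by simp)

end RotInvPoly

/-- A rotation invariant polynomial of degree at most `m` in `x ∈ ℝⁿ`
is a polynomial in `|x|²` of degree at most `⌊m/2⌋`. -/
theorem rotation_invariant_poly (n m : ℕ)
    (p : MvPolynomial (Fin n) ℂ) (hdeg : p.totalDegree ≤ m) (hinv : RotInvPoly p) :
    ∃ b : ℕ → ℂ, ∀ x : Fin n → ℝ,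
      evalRE p x = ∑ k ∈ Finset.range (m / 2 + 1),
        b k * (∑ i : Fin n, (x i : ℂ) ^ 2) ^ k := by
  rcases n with _ | n
  · refine ⟨Pi.single 0 (evalRE p 0), fun x => ?_⟩
    rw [Subsingleton.elim x 0, sum_range_succ']
    simp
  have hQ : (p.axisPoly 0).natDegree < 2 * (m / 2 + 1) := by
    have := (p.natDegree_axisPoly_le 0).trans hdeg
    omega
  refine ⟨fun k => (p.axisPoly 0).coeff (2 * k), fun x => ?_⟩
  have hnorm : ((‖WithLp.toLp 2 x‖ : ℝ) : ℂ) ^ 2 = ∑ i, (x i : ℂ) ^ 2 := by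
    rw [← Complex.ofReal_pow, EuclideanSpace.norm_sq_eq]
    simp only [Real.norm_eq_abs, sq_abs]
    push_cast
    rfl
  rw [hinv.evalRE_eq_eval_axisPoly_norm 0 x,
    eval_eq_sum_range_coeff_two_mul hQ (hinv.eval_axisPoly_neg 0 _), hnorm]
end
end
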